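/- arXiv:2110.10336 — 7 statements merged into one kernel-verified Lean document; each statement's English description precedes it below -/
import Mathlib

section
/- Let v ≥ 3 be an integer and let x, X1, X2, X3 be complex numbers such that X1, X2, X3 are pairwise distinct, x·Xi ≠ 1 for i = 1,2,3, and X1^v = X2^v = X3^v. Then Σ_{m=0}^{v−3} x^m · h_m(X1,X2,X3) = (1 − x^v·X2^v) / ((1−x·X1)(1−x·X2)(1−x·X3)). -/
set_option maxHeartbeats 1000000


noncomputable section

/-- The complete homogeneous symmetric polynomial of degree `m` in three variables:
`h_m(X1,X2,X3) = Σ_{a+b+c=m, a,b,c ≥ 0} X1^a·X2^b·X3^c`. -/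
def hsym (m : ℕ) (X1 X2 X3 : ℂ) : ℂ :=
  ∑ a ∈ Finset.range (m + 1), ∑ b ∈ Finset.range (m + 1 - a),
    X1 ^ a * X2 ^ b * X3 ^ (m - a - b)

/-- Lemma A.4 of Fehily–Ridout: for `v ≥ 3` and `X1, X2, X3` pairwise distinct with
`x·Xi ≠ 1` and `X1^v = X2^v = X3^v`, the weighted sum of complete homogeneous symmetric
polynomials `Σ_{m=0}^{v−3} x^m·h_m(X1,X2,X3)` evaluates to
`(1 − x^v·X2^v) / ((1−x·X1)(1−x·X2)(1−x·X3))`. -/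
theorem sum_of_complete_homogeneous_polys
    (v : ℕ) (hv : 3 ≤ v) (x X1 X2 X3 : ℂ)
    (h12 : X1 ≠ X2) (h13 : X1 ≠ X3) (h23 : X2 ≠ X3)
    (hx1 : x * X1 ≠ 1) (hx2 : x * X2 ≠ 1) (hx3 : x * X3 ≠ 1)
    (hv12 : X1 ^ v = X2 ^ v) (hv23 : X2 ^ v = X3 ^ v) :
    ∑ m ∈ Finset.range (v - 2), x ^ m * hsym m X1 X2 X3 =
      (1 - x ^ v * X2 ^ v) / ((1 - x * X1) * (1 - x * X2) * (1 - x * X3)) := by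
  have hvpos : v ≠ 0 := by omega
  have hX1 : X1 ≠ 0 := by
    intro h; rw [h, zero_pow hvpos] at hv12
    exact h12 (by rw [h, (pow_eq_zero_iff hvpos).mp hv12.symm])
  have hX2 : X2 ≠ 0 := by
    intro h; rw [h, zero_pow hvpos] at hv12
    exact h12 (by rw [h, (pow_eq_zero_iff hvpos).mp hv12])
  have hX3 : X3 ≠ 0 := by
    intro h; rw [h, zero_pow hvpos] at hv23
    exact h23 (by rw [h, (pow_eq_zero_iff hvpos).mp hv23])
  have hd12 : X1 - X2 ≠ 0 := sub_ne_zero.mpr h12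
  have hd13 : X1 - X3 ≠ 0 := sub_ne_zero.mpr h13
  have hd23 : X2 - X3 ≠ 0 := sub_ne_zero.mpr h23
  have hE1 : (1 : ℂ) - x * X1 ≠ 0 := sub_ne_zero.mpr (Ne.symm hx1)
  have hE2 : (1 : ℂ) - x * X2 ≠ 0 := sub_ne_zero.mpr (Ne.symm hx2)
  have hE3 : (1 : ℂ) - x * X3 ≠ 0 := sub_ne_zero.mpr (Ne.symm hx3)
  set N := v - 2 with hN
  -- key formula for hsym
  have key : ∀ m : ℕ, hsym m X1 X2 X3 * ((X2 - X3) * ((X1 - X2) * (X1 - X3))) =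
      X2 * (X1 - X3) * (X1 ^ (m+1) - X2 ^ (m+1))
        - X3 * (X1 - X2) * (X1 ^ (m+1) - X3 ^ (m+1)) := by
    intro m
    have step1 : hsym m X1 X2 X3 * (X2 - X3) =
        X2 * ∑ a ∈ Finset.range (m+1), X1 ^ a * X2 ^ (m - a)
          - X3 * ∑ a ∈ Finset.range (m+1), X1 ^ a * X3 ^ (m - a) := by
      unfold hsym
      rw [Finset.sum_mul, Finset.mul_sum, Finset.mul_sum, ← Finset.sum_sub_distrib]
      apply Finset.sum_congr rfl
      intro a ha
      have ha' : a ≤ m := by simpa [Nat.lt_succ_iff] using ha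
      have hk : m + 1 - a = (m - a) + 1 := by omega
      have inner : (∑ b ∈ Finset.range ((m - a) + 1), X2 ^ b * X3 ^ ((m - a) - b))
          * (X2 - X3) = X2 ^ ((m-a)+1) - X3 ^ ((m-a)+1) := by
        have := geom_sum₂_mul X2 X3 ((m - a) + 1)
        simpa using this
      calc (∑ b ∈ Finset.range (m + 1 - a), X1 ^ a * X2 ^ b * X3 ^ (m - a - b)) * (X2 - X3)
          = X1 ^ a * ((∑ b ∈ Finset.range ((m - a) + 1), X2 ^ b * X3 ^ ((m - a) - b)) * (X2 - X3)) := by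
            rw [hk]
            simp only [Finset.sum_mul, Finset.mul_sum]
            exact Finset.sum_congr rfl fun b _ => by ring
        _ = X1 ^ a * (X2 ^ ((m-a)+1) - X3 ^ ((m-a)+1)) := by rw [inner]
        _ = X2 * (X1 ^ a * X2 ^ (m - a)) - X3 * (X1 ^ a * X3 ^ (m - a)) := by ring
    have g2 : (∑ a ∈ Finset.range (m+1), X1 ^ a * X2 ^ (m - a)) * (X1 - X2)
        = X1 ^ (m+1) - X2 ^ (m+1) := by
      have := geom_sum₂_mul X1 X2 (m + 1); simpa using this
    have g3 : (∑ a ∈ Finset.range (m+1), X1 ^ a * X3 ^ (m - a)) * (X1 - X3)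
        = X1 ^ (m+1) - X3 ^ (m+1) := by
      have := geom_sum₂_mul X1 X3 (m + 1); simpa using this
    calc hsym m X1 X2 X3 * ((X2 - X3) * ((X1 - X2) * (X1 - X3)))
        = (hsym m X1 X2 X3 * (X2 - X3)) * ((X1 - X2) * (X1 - X3)) := by ring
      _ = (X2 * ∑ a ∈ Finset.range (m+1), X1 ^ a * X2 ^ (m - a)
            - X3 * ∑ a ∈ Finset.range (m+1), X1 ^ a * X3 ^ (m - a)) * ((X1 - X2) * (X1 - X3)) := by
          rw [step1]
      _ = X2 * (X1 - X3) * ((∑ a ∈ Finset.range (m+1), X1 ^ a * X2 ^ (m - a)) * (X1 - X2))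
            - X3 * (X1 - X2) * ((∑ a ∈ Finset.range (m+1), X1 ^ a * X3 ^ (m - a)) * (X1 - X3)) := by
          ring
      _ = _ := by rw [g2, g3]
  -- sum over m
  have hsum : (∑ m ∈ Finset.range N, x ^ m * hsym m X1 X2 X3)
        * ((X2 - X3) * ((X1 - X2) * (X1 - X3))) =
      X2 * (X1 - X3) * (X1 * ∑ m ∈ Finset.range N, (x * X1) ^ m
          - X2 * ∑ m ∈ Finset.range N, (x * X2) ^ m)
        - X3 * (X1 - X2) * (X1 * ∑ m ∈ Finset.range N, (x * X1) ^ m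
          - X3 * ∑ m ∈ Finset.range N, (x * X3) ^ m) := by
    rw [Finset.sum_mul]
    have : ∀ m ∈ Finset.range N, (x ^ m * hsym m X1 X2 X3)
        * ((X2 - X3) * ((X1 - X2) * (X1 - X3))) =
        X2 * (X1 - X3) * (X1 * (x*X1)^m - X2 * (x*X2)^m)
          - X3 * (X1 - X2) * (X1 * (x*X1)^m - X3 * (x*X3)^m) := by
      intro m _
      calc (x ^ m * hsym m X1 X2 X3) * ((X2 - X3) * ((X1 - X2) * (X1 - X3)))
          = x ^ m * (hsym m X1 X2 X3 * ((X2 - X3) * ((X1 - X2) * (X1 - X3)))) := by ring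
        _ = x ^ m * (X2 * (X1 - X3) * (X1 ^ (m+1) - X2 ^ (m+1))
              - X3 * (X1 - X2) * (X1 ^ (m+1) - X3 ^ (m+1))) := by rw [key m]
        _ = _ := by rw [mul_pow, mul_pow, mul_pow]; ring
    rw [Finset.sum_congr rfl this, Finset.sum_sub_distrib, ← Finset.mul_sum, ← Finset.mul_sum,
      Finset.sum_sub_distrib, ← Finset.mul_sum, ← Finset.mul_sum,
      Finset.sum_sub_distrib, ← Finset.mul_sum, ← Finset.mul_sum]
  have hm : ∀ Z : ℂ, Z ^ v = X2 ^ v →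
      (∑ m ∈ Finset.range N, (x * Z) ^ m) * ((x * Z - 1) * Z ^ 2)
        = x ^ N * X2 ^ v - Z ^ 2 := by
    intro Z hZ
    rw [← mul_assoc, geom_sum_mul, sub_mul, one_mul, mul_pow, mul_assoc, ← pow_add,
      show N + 2 = v by omega, hZ]
  have m1 := hm X1 hv12
  have m2 := hm X2 rfl
  have m3 := hm X3 hv23.symm
  have hx1' : x * X1 - 1 ≠ 0 := sub_ne_zero.mpr hx1
  have hx2' : x * X2 - 1 ≠ 0 := sub_ne_zero.mpr hx2
  have hx3' : x * X3 - 1 ≠ 0 := sub_ne_zero.mpr hx3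
  rw [eq_div_iff (mul_ne_zero (mul_ne_zero hE1 hE2) hE3),
    show x ^ v = x ^ N * x ^ 2 by rw [← pow_add, show N + 2 = v by omega]]
  apply mul_right_cancel₀ (b := (X2 - X3) * ((X1 - X2) * (X1 - X3))
      * (((x * X1 - 1) * X1 ^ 2) * (((x * X2 - 1) * X2 ^ 2) * ((x * X3 - 1) * X3 ^ 2))))
    (mul_ne_zero (mul_ne_zero hd23 (mul_ne_zero hd12 hd13))
      (mul_ne_zero (mul_ne_zero hx1' (pow_ne_zero 2 hX1))
        (mul_ne_zero (mul_ne_zero hx2' (pow_ne_zero 2 hX2))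
          (mul_ne_zero hx3' (pow_ne_zero 2 hX3)))))
  linear_combination
    (((1 - x*X1) * (1 - x*X2) * (1 - x*X3))
      * (((x*X1 - 1) * X1^2) * (((x*X2 - 1) * X2^2) * ((x*X3 - 1) * X3^2)))) * hsum
    + (X1 * (X2*(X1 - X3) - X3*(X1 - X2)) * ((1 - x*X1) * (1 - x*X2) * (1 - x*X3))
        * (((x*X2 - 1) * X2^2) * ((x*X3 - 1) * X3^2))) * m1
    - (X2^2 * (X1 - X3) * ((1 - x*X1) * (1 - x*X2) * (1 - x*X3))
        * (((x*X1 - 1) * X1^2) * ((x*X3 - 1) * X3^2))) * m2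
    + (X3^2 * (X1 - X2) * ((1 - x*X1) * (1 - x*X2) * (1 - x*X3))
        * (((x*X1 - 1) * X1^2) * ((x*X2 - 1) * X2^2))) * m3
end
end

section
/- Let u, v ≥ 3 be coprime integers, let r' = (r'0,r'1,r'2) be an affine sl3 weight of level u−3 and s' = (s'0,s'1,s'2) one of level v−3, both with all components nonnegative. Let j' be real, κ = u/(3v) − 1/2, ξ = −2πi·(u/v)·(s̄'+ρ), X1 = exp(⟨ω2,ξ⟩), X2 = exp(⟨ω1−ω2,ξ⟩), X3 = exp(⟨−ω1,ξ⟩), and x = −exp(2πi(⟨r̄'+ρ, ω2⟩ − (j'−κ))). For i = 0,1,2 set c_i = (j'−κ) − j^tw(σ^i(r',s')) and assume sin(π·c_i) ≠ 0. Then Σ_{m=0}^{v−3} x^m·h_m(X1,X2,X3) = (1 − exp(−2πi·v·(j'−κ))·exp(2πi·v·j^tw(r',s'))) · exp(3πi(j'−κ)) / (8·sin(π c_0)·sin(π c_1)·sin(π c_2)). -/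
noncomputable section

open Complex

/-- The bilinear form on the sl₃ weight plane in Dynkin-label coordinates. -/
def form (a b : ℂ × ℂ) : ℂ :=
  (2 * a.1 * b.1 + a.1 * b.2 + a.2 * b.1 + 2 * a.2 * b.2) / 3

/-- The Weyl vector of sl₃. -/
def rho : ℂ × ℂ := (1, 1)

/-- The first fundamental weight of sl₃. -/
def om1 : ℂ × ℂ := (1, 0)

/-- The second fundamental weight of sl₃. -/
def om2 : ℂ × ℂ := (0, 1)

/-- The twisted charge `j^tw(r,s) = (r1−r2)/3 − (u/(3v))·(s1−s2) − 1/2`, as a function of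
the four relevant Dynkin labels of the pair `(r,s)` of affine sl₃ weights. -/
def jtw (u v : ℕ) (r1 r2 s1 s2 : ℤ) : ℝ :=
  ((r1 : ℝ) - (r2 : ℝ)) / 3 - ((u : ℝ) / (3 * (v : ℝ))) * ((s1 : ℝ) - (s2 : ℝ)) - 1 / 2

/-!
Multiplying by `x ^ m` gives `x ^ m * h_m(X1, X2, X3) = h_m(q1, q2, q3)` with `q_i = x * X_i`, and
these are `e^{-2πi c}` for the three charges `c = c2, c0, c1`. The differences of the `c`'s are
integers minus `(u/v)(s'_k + 1)` with `0 < s'_k + 1 < v`; by coprimality they are not integers,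
so the `q_i` are distinct, while all `q_i ^ v` agree. Multiplied by the Vandermonde product,
`h_m(q1, q2, q3)` becomes the alternant of `q ^ (m + 2)`, so summing geometric series gives
`(1 - q ^ v) / ∏ (1 - q_i)`. Finally `2 sin(πc) = -i e^{iπc} (1 - e^{-2πic})` and
`c0 + c1 + c2 = 3(j' - κ) + 3/2` turn `∏ (1 - q_i)` into the product of sines.
-/

open Real Finset

lemma hsym_succ (m : ℕ) (X1 X2 X3 : ℂ) :
    hsym (m + 1) X1 X2 X3 =
      X1 * hsym m X1 X2 X3 + ∑ b ∈ range (m + 2), X2 ^ b * X3 ^ (m + 1 - b) := by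
  rw [hsym, sum_range_succ', hsym, mul_sum]
  congr 1
  · refine sum_congr rfl fun a _ => ?_
    rw [mul_sum, show m + 1 + 1 - (a + 1) = m + 1 - a by omega]
    refine sum_congr rfl fun b _ => ?_
    rw [show m + 1 - (a + 1) - b = m - a - b by omega]
    ring
  · simp

lemma hsym_mul_vandermonde (m : ℕ) (q1 q2 q3 : ℂ) :
    hsym m q1 q2 q3 * ((q1 - q2) * (q1 - q3) * (q2 - q3)) =
      q1 ^ (m + 2) * (q2 - q3) - q2 ^ (m + 2) * (q1 - q3) + q3 ^ (m + 2) * (q1 - q2) := by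
  induction m with
  | zero => simp [hsym]; ring
  | succ m ih =>
    have h23 : (∑ b ∈ range (m + 2), q2 ^ b * q3 ^ (m + 1 - b)) * (q2 - q3) =
        q2 ^ (m + 2) - q3 ^ (m + 2) := geom_sum₂_mul q2 q3 (m + 2)
    rw [hsym_succ]
    linear_combination q1 * ih + (q1 - q2) * (q1 - q3) * h23

lemma pow_mul_hsym (m : ℕ) (x X1 X2 X3 : ℂ) :
    x ^ m * hsym m X1 X2 X3 = hsym m (x * X1) (x * X2) (x * X3) := by
  rw [hsym, hsym, mul_sum]
  refine sum_congr rfl fun a ha => ?_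
  rw [mul_sum]
  refine sum_congr rfl fun b hb => ?_
  simp only [mem_range] at ha hb
  obtain ⟨c, rfl⟩ : ∃ c, m = a + b + c := ⟨m - a - b, by omega⟩
  rw [show a + b + c - a - b = c by omega]
  ring

lemma sum_range_hsym_of_pow_eq {n : ℕ} (hn : 2 ≤ n) {q1 q2 q3 P : ℂ}
    (h1 : q1 ^ n = P) (h2 : q2 ^ n = P) (h3 : q3 ^ n = P)
    (h12 : q1 ≠ q2) (h13 : q1 ≠ q3) (h23 : q2 ≠ q3)
    (e1 : 1 - q1 ≠ 0) (e2 : 1 - q2 ≠ 0) (e3 : 1 - q3 ≠ 0) :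
    ∑ m ∈ range (n - 2), hsym m q1 q2 q3 = (1 - P) / ((1 - q1) * (1 - q2) * (1 - q3)) := by
  obtain ⟨N, rfl⟩ : ∃ N, n = N + 2 := ⟨n - 2, by omega⟩
  have geom (q : ℂ) (hq : q ^ (N + 2) = P) :
      (1 - q) * ∑ m ∈ range N, q ^ (m + 2) = q ^ 2 - P := by
    rw [← hq, sum_congr rfl fun m _ => pow_add q m 2, ← sum_mul, ← mul_assoc,
      mul_neg_geom_sum]
    ring
  have hV : (q1 - q2) * (q1 - q3) * (q2 - q3) ≠ 0 := by
    simp only [ne_eq, mul_eq_zero, sub_eq_zero, not_or]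
    exact ⟨⟨h12, h13⟩, h23⟩
  have hS : (∑ m ∈ range N, hsym m q1 q2 q3) * ((q1 - q2) * (q1 - q3) * (q2 - q3)) =
      (∑ m ∈ range N, q1 ^ (m + 2)) * (q2 - q3) - (∑ m ∈ range N, q2 ^ (m + 2)) * (q1 - q3)
        + (∑ m ∈ range N, q3 ^ (m + 2)) * (q1 - q2) := by
    simp only [sum_mul, ← sum_sub_distrib, ← sum_add_distrib, hsym_mul_vandermonde]
  rw [Nat.add_sub_cancel, eq_div_iff (by simp [e1, e2, e3]), ← mul_left_inj' hV]
  linear_combination (1 - q1) * (1 - q2) * (1 - q3) * hS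
    + (q2 - q3) * (1 - q2) * (1 - q3) * geom q1 h1
    - (q1 - q3) * (1 - q1) * (1 - q3) * geom q2 h2
    + (q1 - q2) * (1 - q1) * (1 - q2) * geom q3 h3

def expTwoPiI (t : ℝ) : ℂ := exp (2 * π * I * t)

lemma expTwoPiI_add (a b : ℝ) : expTwoPiI (a + b) = expTwoPiI a * expTwoPiI b := by
  simp only [expTwoPiI, ofReal_add, mul_add, Complex.exp_add]

lemma expTwoPiI_intCast_add (n : ℤ) (a : ℝ) : expTwoPiI (n + a) = expTwoPiI a := by
  rw [expTwoPiI_add, expTwoPiI, ofReal_intCast, mul_comm _ (n : ℂ), exp_int_mul_two_pi_mul_I,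
    one_mul]

lemma expTwoPiI_pow (n : ℕ) (a : ℝ) : expTwoPiI a ^ n = expTwoPiI (n * a) := by
  rw [expTwoPiI, ← Complex.exp_nat_mul, expTwoPiI]
  push_cast
  ring_nf

lemma exists_intCast_of_expTwoPiI_eq {a b : ℝ} (h : expTwoPiI a = expTwoPiI b) :
    ∃ n : ℤ, a - b = n := by
  obtain ⟨n, hn⟩ := exp_eq_exp_iff_exists_int.mp h
  refine ⟨n, ?_⟩
  have : ((a - b : ℝ) : ℂ) = n := by
    apply mul_left_cancel₀ two_pi_I_ne_zero
    push_cast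
    linear_combination hn
  exact_mod_cast this

lemma neg_exp_mul_exp_eq_expTwoPiI {A B : ℂ} {a : ℝ} (n : ℤ)
    (h : A + B + π * I = 2 * π * I * (n + a)) : -exp A * exp B = expTwoPiI a := by
  rw [← expTwoPiI_intCast_add n, expTwoPiI]
  push_cast
  rw [← h, Complex.exp_add, Complex.exp_add, exp_pi_mul_I]
  ring

lemma two_mul_sin_pi_mul (c : ℝ) :
    2 * (Real.sin (π * c) : ℂ) = -I * expTwoPiI (c / 2) * (1 - expTwoPiI (-c)) := by
  have h : expTwoPiI (c / 2) * expTwoPiI (-c) = expTwoPiI (-(c / 2)) := by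
    rw [← expTwoPiI_add]; ring_nf
  rw [mul_sub, mul_one, mul_assoc, h, ofReal_sin, Complex.sin, expTwoPiI, expTwoPiI]
  push_cast
  ring_nf

lemma one_sub_expTwoPiI_neg_ne_zero {c : ℝ} (h : Real.sin (π * c) ≠ 0) :
    1 - expTwoPiI (-c) ≠ 0 := by
  intro h0
  apply h
  exact_mod_cast (by simpa [h0] using two_mul_sin_pi_mul c : (Real.sin (π * c) : ℂ) = 0)

lemma eight_mul_sin_mul_sin_mul_sin (a b c : ℝ) :
    8 * (Real.sin (π * a) : ℂ) * Real.sin (π * b) * Real.sin (π * c) =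
      I * expTwoPiI ((a + b + c) / 2) *
        ((1 - expTwoPiI (-a)) * (1 - expTwoPiI (-b)) * (1 - expTwoPiI (-c))) := by
  have hsum : expTwoPiI ((a + b + c) / 2) =
      expTwoPiI (a / 2) * expTwoPiI (b / 2) * expTwoPiI (c / 2) := by
    rw [← expTwoPiI_add, ← expTwoPiI_add]; ring_nf
  have I_cube : I ^ 3 = -I := by rw [pow_succ, I_sq]; ring
  calc 8 * (Real.sin (π * a) : ℂ) * Real.sin (π * b) * Real.sin (π * c)
      = (2 * Real.sin (π * a)) * (2 * Real.sin (π * b)) * (2 * Real.sin (π * c)) := by ring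
    _ = _ := by
      rw [two_mul_sin_pi_mul, two_mul_sin_pi_mul, two_mul_sin_pi_mul, hsum]
      linear_combination (-(expTwoPiI (a / 2) * expTwoPiI (b / 2) * expTwoPiI (c / 2) *
        ((1 - expTwoPiI (-a)) * (1 - expTwoPiI (-b)) * (1 - expTwoPiI (-c))))) * I_cube

lemma eight_mul_sin_mul_sin_mul_sin_of_add_eq {a b c t : ℝ} (h : a + b + c = 3 * t + 3 / 2) :
    8 * (Real.sin (π * a) : ℂ) * Real.sin (π * b) * Real.sin (π * c) =
      (1 - expTwoPiI (-a)) * (1 - expTwoPiI (-b)) * (1 - expTwoPiI (-c)) *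
        exp (3 * π * I * t) := by
  have half : expTwoPiI ((a + b + c) / 2) = -I * exp (3 * π * I * t) := by
    rw [h, expTwoPiI, show 2 * π * I * (((3 * t + 3 / 2) / 2 : ℝ) : ℂ) =
      3 * π * I * t + π * I + π / 2 * I by push_cast; ring]
    rw [Complex.exp_add, Complex.exp_add, exp_pi_mul_I, exp_pi_div_two_mul_I]
    ring
  rw [eight_mul_sin_mul_sin_mul_sin, half]
  linear_combination (-((1 - expTwoPiI (-a)) * (1 - expTwoPiI (-b)) * (1 - expTwoPiI (-c)) *
        exp (3 * π * I * t))) * I_sq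

lemma div_mul_intCast_ne_intCast {u v : ℕ} (huv : u.Coprime v) {k : ℤ} (hk0 : 0 < k)
    (hkv : k < v) (n : ℤ) : (u / v * k : ℝ) ≠ n := by
  intro h
  have hv : (v : ℝ) ≠ 0 := Nat.cast_ne_zero.mpr (by omega)
  have hdvd : (v : ℤ) ∣ u * k := by
    refine ⟨n, ?_⟩
    rw [div_mul_eq_mul_div, div_eq_iff hv] at h
    exact_mod_cast (by linarith : (u * k : ℝ) = v * n)
  have hco : IsCoprime (v : ℤ) u := Int.isCoprime_iff_gcd_eq_one.mpr (by simpa using huv.symm)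
  have := Int.le_of_dvd hk0 (hco.dvd_of_dvd_mul_left hdvd)
  omega

lemma expTwoPiI_pow_eq_of_sub_eq {u v : ℕ} {a b : ℝ} {n k : ℤ} (hv : (v : ℝ) ≠ 0)
    (h : a - b = n - u / v * k) : expTwoPiI a ^ v = expTwoPiI b ^ v := by
  have hva : v * a = ((v * n - u * k : ℤ) : ℝ) + v * b := by
    push_cast
    field_simp at h
    linear_combination h
  rw [expTwoPiI_pow, expTwoPiI_pow, hva, expTwoPiI_intCast_add]

lemma expTwoPiI_ne_of_sub_eq {u v : ℕ} (huv : u.Coprime v) {a b : ℝ} {n k : ℤ} (hk0 : 0 < k)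
    (hkv : k < v) (h : a - b = n - u / v * k) : expTwoPiI a ≠ expTwoPiI b := by
  intro he
  obtain ⟨m, hm⟩ := exists_intCast_of_expTwoPiI_eq he
  exact div_mul_intCast_ne_intCast huv hk0 hkv (n - m) (by push_cast; linarith)

lemma jtw_sub_jtw {u v : ℕ} (hv : (v : ℝ) ≠ 0) {r0 r1 r2 s0 s1 s2 : ℤ}
    (hr : r0 + r1 + r2 = u - 3) (hs : s0 + s1 + s2 = v - 3) :
    jtw u v r2 r0 s2 s0 - jtw u v r1 r2 s1 s2 =
      ((r2 + 1 : ℤ) : ℝ) - u / v * ((s2 + 1 : ℤ) : ℝ) := by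
  have hr' : (r0 : ℝ) + r1 + r2 = u - 3 := by exact_mod_cast hr
  have hs' : (s0 : ℝ) + s1 + s2 = v - 3 := by exact_mod_cast hs
  simp only [jtw]
  push_cast
  field_simp
  linear_combination (-2 * v : ℝ) * hr' + 2 * u * hs'

lemma jtw_add_jtw_add_jtw (u v : ℕ) (r0 r1 r2 s0 s1 s2 : ℤ) :
    jtw u v r1 r2 s1 s2 + jtw u v r0 r1 s0 s1 + jtw u v r2 r0 s2 s0 = -3 / 2 := by
  simp only [jtw]
  ring

lemma expTwoPiI_sub_jtw_cycle {u v : ℕ} (huv : u.Coprime v) {r0 r1 r2 s0 s1 s2 : ℤ}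
    (hr : r0 + r1 + r2 = u - 3) (hs : s0 + s1 + s2 = v - 3)
    (hs0 : 0 ≤ s0) (hs1 : 0 ≤ s1) (hs2 : 0 ≤ s2) (t : ℝ) :
    expTwoPiI (jtw u v r2 r0 s2 s0 - t) ^ v = expTwoPiI (jtw u v r1 r2 s1 s2 - t) ^ v ∧
      expTwoPiI (jtw u v r2 r0 s2 s0 - t) ≠ expTwoPiI (jtw u v r1 r2 s1 s2 - t) := by
  have hv : (v : ℝ) ≠ 0 := Nat.cast_ne_zero.mpr (by omega)
  have h := jtw_sub_jtw hv hr hs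
  rw [← sub_sub_sub_cancel_right _ _ t] at h
  exact ⟨expTwoPiI_pow_eq_of_sub_eq hv h, expTwoPiI_ne_of_sub_eq huv (by omega) (by omega) h⟩

lemma x_mul_exp_form_eq {u v : ℕ} {r0 r1 r2 s0 s1 s2 : ℤ} {t : ℝ} {ξ : ℂ × ℂ} {x : ℂ}
    (hv : (v : ℂ) ≠ 0) (hr : r0 + r1 + r2 = u - 3) (hs : s0 + s1 + s2 = v - 3)
    (hξ : ξ = (-(2 * π * I) * ((u : ℂ) / v)) • (((s1 : ℂ), (s2 : ℂ)) + rho))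
    (hx : x = -exp (2 * π * I * (form (((r1 : ℂ), (r2 : ℂ)) + rho) om2 - (t : ℂ)))) :
    x * exp (form om2 ξ) = expTwoPiI (jtw u v r2 r0 s2 s0 - t) ∧
      x * exp (form (om1 - om2) ξ) = expTwoPiI (jtw u v r1 r2 s1 s2 - t) ∧
      x * exp (form (-om1) ξ) = expTwoPiI (jtw u v r0 r1 s0 s1 - t) := by
  have hr' : (r0 : ℂ) + r1 + r2 = u - 3 := by exact_mod_cast hr
  have hs' : (s0 : ℂ) + s1 + s2 = v - 3 := by exact_mod_cast hs
  subst hξ hx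
  refine ⟨neg_exp_mul_exp_eq_expTwoPiI 1 ?_, neg_exp_mul_exp_eq_expTwoPiI (r2 + 2) ?_,
    neg_exp_mul_exp_eq_expTwoPiI (r1 + r2 + 3) ?_⟩ <;>
  simp only [form, om1, om2, rho, jtw, Prod.smul_mk, Prod.mk_add_mk, Prod.fst_sub, Prod.snd_sub,
    Prod.fst_neg, Prod.snd_neg, smul_eq_mul] <;>
  push_cast <;>
  field_simp
  · linear_combination 2 * v * hr' - 2 * u * hs'
  · ring
  · linear_combination -2 * v * hr' + 2 * u * hs'

theorem sum_of_fundamental_characters_general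
    (u v : ℕ) (hv : 3 ≤ v) (huv : Nat.Coprime u v)
    (r0' r1' r2' s0' s1' s2' : ℤ)
    (hs0 : 0 ≤ s0') (hs1 : 0 ≤ s1') (hs2 : 0 ≤ s2')
    (hrsum : r0' + r1' + r2' = (u : ℤ) - 3) (hssum : s0' + s1' + s2' = (v : ℤ) - 3)
    (j' κ : ℝ)
    (ξ : ℂ × ℂ)
    (hξ : ξ = (-(2 * (Real.pi : ℂ) * Complex.I) * ((u : ℂ) / (v : ℂ))) •
      (((s1' : ℂ), (s2' : ℂ)) + rho))
    (X1 X2 X3 x : ℂ)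
    (hX1 : X1 = Complex.exp (form om2 ξ))
    (hX2 : X2 = Complex.exp (form (om1 - om2) ξ))
    (hX3 : X3 = Complex.exp (form (-om1) ξ))
    (hx : x = -Complex.exp (2 * (Real.pi : ℂ) * Complex.I *
      (form (((r1' : ℂ), (r2' : ℂ)) + rho) om2 - ((j' - κ : ℝ) : ℂ))))
    (c0 c1 c2 : ℝ)
    (hc0 : c0 = (j' - κ) - jtw u v r1' r2' s1' s2')
    (hc1 : c1 = (j' - κ) - jtw u v r0' r1' s0' s1')
    (hc2 : c2 = (j' - κ) - jtw u v r2' r0' s2' s0')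
    (hsin0 : Real.sin (Real.pi * c0) ≠ 0)
    (hsin1 : Real.sin (Real.pi * c1) ≠ 0)
    (hsin2 : Real.sin (Real.pi * c2) ≠ 0) :
    ∑ m ∈ Finset.range (v - 2), x ^ m * hsym m X1 X2 X3 =
      (1 - Complex.exp (-(2 * (Real.pi : ℂ) * Complex.I) * (v : ℂ) * ((j' - κ : ℝ) : ℂ)) *
            Complex.exp (2 * (Real.pi : ℂ) * Complex.I * (v : ℂ) *
              ((jtw u v r1' r2' s1' s2' : ℝ) : ℂ))) *
        Complex.exp (3 * (Real.pi : ℂ) * Complex.I * ((j' - κ : ℝ) : ℂ)) /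
        (8 * ((Real.sin (Real.pi * c0) : ℝ) : ℂ) * ((Real.sin (Real.pi * c1) : ℝ) : ℂ) *
          ((Real.sin (Real.pi * c2) : ℝ) : ℂ)) := by
  obtain ⟨hq1, hq2, hq3⟩ :=
    x_mul_exp_form_eq (Nat.cast_ne_zero.mpr (by omega)) hrsum hssum hξ hx
  set t := j' - κ
  obtain ⟨hp20, hne20⟩ := expTwoPiI_sub_jtw_cycle huv hrsum hssum hs0 hs1 hs2 t
  obtain ⟨hp12, hne12⟩ := expTwoPiI_sub_jtw_cycle huv (r0 := r1') (r1 := r2') (r2 := r0')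
    (by omega) (by omega) hs1 hs2 hs0 t
  obtain ⟨hp01, hne01⟩ := expTwoPiI_sub_jtw_cycle huv (r0 := r2') (r1 := r0') (r2 := r1')
    (by omega) (by omega) hs2 hs0 hs1 t
  have hsin := eight_mul_sin_mul_sin_mul_sin_of_add_eq (a := c0) (b := c1) (c := c2) (t := t)
    (by linarith [jtw_add_jtw_add_jtw u v r0' r1' r2' s0' s1' s2'])
  have hP : exp (-(2 * π * I) * v * t) * exp (2 * π * I * v * jtw u v r1' r2' s1' s2') =
      expTwoPiI (jtw u v r1' r2' s1' s2' - t) ^ v := by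
    rw [expTwoPiI_pow, expTwoPiI, ← Complex.exp_add]
    push_cast
    ring_nf
  have e0 := one_sub_expTwoPiI_neg_ne_zero hsin0
  have e1 := one_sub_expTwoPiI_neg_ne_zero hsin1
  have e2 := one_sub_expTwoPiI_neg_ne_zero hsin2
  subst hc0 hc1 hc2
  simp only [neg_sub] at hsin e0 e1 e2
  rw [sum_congr rfl fun m _ => pow_mul_hsym m x X1 X2 X3, hX1, hX2, hX3, hq1, hq2, hq3,
    sum_range_hsym_of_pow_eq (by omega) hp20 rfl hp01.symm hne20 hne12.symm hne01 e2 e0 e1,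
    hsin, hP, mul_div_mul_right _ _ (Complex.exp_ne_zero _)]
  ring

/-- Proposition A.3 of Fehily–Ridout: the weighted sum of characters of the fundamental
sl₃-modules `L(m·ω₂)` evaluated at `ξ = −2πi·(u/v)·(s̄'+ρ)` equals
`(1 − e^{−2πi·v·(j'−κ)}·e^{2πi·v·j^tw(r',s')})·e^{3πi(j'−κ)}/(8·sin(πc₀)sin(πc₁)sin(πc₂))`. -/
theorem sum_of_fundamental_characters
    (u v : ℕ) (hu : 3 ≤ u) (hv : 3 ≤ v) (huv : Nat.Coprime u v)
    (r0' r1' r2' s0' s1' s2' : ℤ)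
    (hr0 : 0 ≤ r0') (hr1 : 0 ≤ r1') (hr2 : 0 ≤ r2')
    (hs0 : 0 ≤ s0') (hs1 : 0 ≤ s1') (hs2 : 0 ≤ s2')
    (hrsum : r0' + r1' + r2' = (u : ℤ) - 3) (hssum : s0' + s1' + s2' = (v : ℤ) - 3)
    (j' κ : ℝ) (hκ : κ = (u : ℝ) / (3 * (v : ℝ)) - 1 / 2)
    (ξ : ℂ × ℂ)
    (hξ : ξ = (-(2 * (Real.pi : ℂ) * Complex.I) * ((u : ℂ) / (v : ℂ))) •
      (((s1' : ℂ), (s2' : ℂ)) + rho))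
    (X1 X2 X3 x : ℂ)
    (hX1 : X1 = Complex.exp (form om2 ξ))
    (hX2 : X2 = Complex.exp (form (om1 - om2) ξ))
    (hX3 : X3 = Complex.exp (form (-om1) ξ))
    (hx : x = -Complex.exp (2 * (Real.pi : ℂ) * Complex.I *
      (form (((r1' : ℂ), (r2' : ℂ)) + rho) om2 - ((j' - κ : ℝ) : ℂ))))
    (c0 c1 c2 : ℝ)
    (hc0 : c0 = (j' - κ) - jtw u v r1' r2' s1' s2')
    (hc1 : c1 = (j' - κ) - jtw u v r0' r1' s0' s1')
    (hc2 : c2 = (j' - κ) - jtw u v r2' r0' s2' s0')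
    (hsin0 : Real.sin (Real.pi * c0) ≠ 0)
    (hsin1 : Real.sin (Real.pi * c1) ≠ 0)
    (hsin2 : Real.sin (Real.pi * c2) ≠ 0) :
    ∑ m ∈ Finset.range (v - 2), x ^ m * hsym m X1 X2 X3 =
      (1 - Complex.exp (-(2 * (Real.pi : ℂ) * Complex.I) * (v : ℂ) * ((j' - κ : ℝ) : ℂ)) *
            Complex.exp (2 * (Real.pi : ℂ) * Complex.I * (v : ℂ) *
              ((jtw u v r1' r2' s1' s2' : ℝ) : ℂ))) *
        Complex.exp (3 * (Real.pi : ℂ) * Complex.I * ((j' - κ : ℝ) : ℂ)) /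
        (8 * ((Real.sin (Real.pi * c0) : ℝ) : ℂ) * ((Real.sin (Real.pi * c1) : ℝ) : ℂ) *
          ((Real.sin (Real.pi * c2) : ℝ) : ℂ)) :=
  sum_of_fundamental_characters_general u v hv huv r0' r1' r2' s0' s1' s2' hs0 hs1 hs2 hrsum hssum
    j' κ ξ hξ X1 X2 X3 x hX1 hX2 hX3 hx c0 c1 c2 hc0 hc1 hc2 hsin0 hsin1 hsin2
end
end

section
/- Let u, v ≥ 3 be coprime integers, let r, r' be affine sl3 weights of level u−3 and s, s' affine sl3 weights of level v−3 (arbitrary integer components), and set ξ = −2πi·(u/v)·(s̄'+ρ). Let t1 = (−1,0,1), t2 = (0,1,−1), t3 = (1,−1,0), the level-0 affinizations of the three weights ω2, ω1−ω2, −ω1 of the fundamental sl3-module of highest weight ω2. Then S[(r, s+t1)][(r',s')] + S[(r, s+t2)][(r',s')] + S[(r, s+t3)][(r',s')] = exp(2πi⟨ω2, r̄'+ρ⟩) · (exp(⟨ω2,ξ⟩) + exp(⟨ω1−ω2,ξ⟩) + exp(⟨−ω1,ξ⟩)) · S[(r,s)][(r',s')]. -/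
noncomputable section

open Complex

/-- The first simple reflection of the sl₃ Weyl group. -/
def refl1 : ℂ × ℂ → ℂ × ℂ := fun a => (-a.1, a.1 + a.2)

/-- The second simple reflection of the sl₃ Weyl group. -/
def refl2 : ℂ × ℂ → ℂ × ℂ := fun a => (a.1 + a.2, -a.2)

/-- The six elements of the Weyl group `W` of sl₃ (generated by the two simple
reflections), listed together with their determinants. -/
def weyl : List ((ℂ × ℂ → ℂ × ℂ) × ℂ) :=
  [(id, 1), (refl1, -1), (refl2, -1), (refl1 ∘ refl2, 1), (refl2 ∘ refl1, 1),
   (refl1 ∘ refl2 ∘ refl1, -1)]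

/-- The weighted Weyl sum `Σ_{w ∈ W} det w · exp(c·⟨w(μ), ν⟩)`. -/
def weylSum (c : ℂ) (mu nu : ℂ × ℂ) : ℂ :=
  (weyl.map fun p => p.2 * Complex.exp (c * form (p.1 mu) nu)).sum

/-- The W₃ minimal-model S-matrix entry `S[(r,s)][(r',s')]`, as a function of the
projections `r̄, s̄, r̄', s̄'` of the affine weights onto the sl₃ weight plane:
`S = (1/(√3·u·v)) · e^{2πi(⟨r̄+ρ,s̄'+ρ⟩+⟨s̄+ρ,r̄'+ρ⟩)}
  · (Σ_w det w e^{−2πi(v/u)⟨w(r̄+ρ),r̄'+ρ⟩}) · (Σ_w det w e^{−2πi(u/v)⟨w(s̄+ρ),s̄'+ρ⟩})`. -/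
def Smat (u v : ℕ) (r s r' s' : ℂ × ℂ) : ℂ :=
  (1 / ((Real.sqrt 3 : ℂ) * (u : ℂ) * (v : ℂ))) *
    Complex.exp (2 * (Real.pi : ℂ) * Complex.I *
      (form (r + rho) (s' + rho) + form (s + rho) (r' + rho))) *
    weylSum (-(2 * (Real.pi : ℂ) * Complex.I) * ((v : ℂ) / (u : ℂ))) (r + rho) (r' + rho) *
    weylSum (-(2 * (Real.pi : ℂ) * Complex.I) * ((u : ℂ) / (v : ℂ))) (s + rho) (s' + rho)

lemma key (c : ℂ) (x d : ℂ × ℂ) :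
    Complex.exp (c * form (x + om2) d) + Complex.exp (c * form (x + (om1 - om2)) d) +
      Complex.exp (c * form (x - om1) d) =
    (Complex.exp (c * form om2 d) + Complex.exp (c * form (om1 - om2) d) +
      Complex.exp (c * form (-om1) d)) * Complex.exp (c * form x d) := by
  have h1 : c * form (x + om2) d = c * form om2 d + c * form x d := by
    simp only [form, om2, Prod.fst_add, Prod.snd_add]; ring
  have h2 : c * form (x + (om1 - om2)) d = c * form (om1 - om2) d + c * form x d := by
    simp only [form, om1, om2, Prod.fst_add, Prod.snd_add, Prod.fst_sub, Prod.snd_sub]; ring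
  have h3 : c * form (x - om1) d = c * form (-om1) d + c * form x d := by
    simp only [form, om1, Prod.fst_sub, Prod.snd_sub, Prod.fst_neg, Prod.snd_neg]; ring
  rw [h1, h2, h3, Complex.exp_add, Complex.exp_add, Complex.exp_add]; ring

lemma r1_a (x : ℂ × ℂ) : refl1 (x + om2) = refl1 x + om2 := by
  simp [refl1, om2, Prod.ext_iff]
  try constructor
  all_goals ring
lemma r1_b (x : ℂ × ℂ) : refl1 (x + (om1 - om2)) = refl1 x - om1 := by
  simp [refl1, om1, om2, Prod.ext_iff] <;> try constructor
  all_goals ring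
lemma r1_c (x : ℂ × ℂ) : refl1 (x - om1) = refl1 x + (om1 - om2) := by
  simp [refl1, om1, om2, Prod.ext_iff] <;> try constructor
  all_goals ring
lemma r2_a (x : ℂ × ℂ) : refl2 (x + om2) = refl2 x + (om1 - om2) := by
  simp [refl2, om1, om2, Prod.ext_iff] <;> try constructor
  all_goals ring
lemma r2_b (x : ℂ × ℂ) : refl2 (x + (om1 - om2)) = refl2 x + om2 := by
  simp [refl2, om1, om2, Prod.ext_iff] <;> try constructor
  all_goals ring
lemma r2_c (x : ℂ × ℂ) : refl2 (x - om1) = refl2 x - om1 := by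
  simp [refl2, om1, Prod.ext_iff] <;> try constructor
  all_goals ring

lemma weylSum_shift (c : ℂ) (a d : ℂ × ℂ) :
    weylSum c (a + om2) d + weylSum c (a + (om1 - om2)) d + weylSum c (a - om1) d =
    (Complex.exp (c * form om2 d) + Complex.exp (c * form (om1 - om2) d) +
      Complex.exp (c * form (-om1) d)) * weylSum c a d := by
  have k1 := key c a d
  have k2 := key c (refl1 a) d
  have k3 := key c (refl2 a) d
  have k4 := key c (refl1 (refl2 a)) d
  have k5 := key c (refl2 (refl1 a)) d
  have k6 := key c (refl1 (refl2 (refl1 a))) d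
  simp only [weylSum, weyl, List.map_cons, List.map_nil, List.sum_cons, List.sum_nil,
    Function.comp_apply, id_eq, r1_a, r1_b, r1_c, r2_a, r2_b, r2_c]
  linear_combination k1 - k2 - k3 + k4 + k5 - k6

lemma form_smul (t : ℂ) (x y : ℂ × ℂ) : form x (t • y) = t * form x y := by
  simp only [form, Prod.smul_fst, Prod.smul_snd, smul_eq_mul]; ring

/-- Proposition A.2 of Fehily–Ridout (case of the fundamental weight ω₂): summing the
W₃ S-matrix entries over the shifts of `s` by the three weights `ω₂, ω₁−ω₂, −ω₁` of the
fundamental sl₃-module `L(ω₂)` multiplies `S[(r,s)][(r',s')]` by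
`e^{2πi⟨ω₂,r̄'+ρ⟩}·(e^{⟨ω₂,ξ⟩}+e^{⟨ω₁−ω₂,ξ⟩}+e^{⟨−ω₁,ξ⟩})`. -/
theorem smatrix_tensor_om2
    (u v : ℕ) (hu : 3 ≤ u) (hv : 3 ≤ v) (huv : Nat.Coprime u v)
    (r0 r1 r2 r0' r1' r2' s0 s1 s2 s0' s1' s2' : ℤ)
    (hrsum : r0 + r1 + r2 = (u : ℤ) - 3) (hrsum' : r0' + r1' + r2' = (u : ℤ) - 3)
    (hssum : s0 + s1 + s2 = (v : ℤ) - 3) (hssum' : s0' + s1' + s2' = (v : ℤ) - 3)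
    (ξ : ℂ × ℂ)
    (hξ : ξ = (-(2 * (Real.pi : ℂ) * Complex.I) * ((u : ℂ) / (v : ℂ))) •
      (((s1' : ℂ), (s2' : ℂ)) + rho)) :
    Smat u v ((r1 : ℂ), (r2 : ℂ)) (((s1 : ℂ), (s2 : ℂ)) + om2)
        ((r1' : ℂ), (r2' : ℂ)) ((s1' : ℂ), (s2' : ℂ)) +
      Smat u v ((r1 : ℂ), (r2 : ℂ)) (((s1 : ℂ), (s2 : ℂ)) + (om1 - om2))
        ((r1' : ℂ), (r2' : ℂ)) ((s1' : ℂ), (s2' : ℂ)) +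
      Smat u v ((r1 : ℂ), (r2 : ℂ)) (((s1 : ℂ), (s2 : ℂ)) - om1)
        ((r1' : ℂ), (r2' : ℂ)) ((s1' : ℂ), (s2' : ℂ)) =
      Complex.exp (2 * (Real.pi : ℂ) * Complex.I *
          form om2 (((r1' : ℂ), (r2' : ℂ)) + rho)) *
        (Complex.exp (form om2 ξ) + Complex.exp (form (om1 - om2) ξ) +
          Complex.exp (form (-om1) ξ)) *
        Smat u v ((r1 : ℂ), (r2 : ℂ)) ((s1 : ℂ), (s2 : ℂ))
          ((r1' : ℂ), (r2' : ℂ)) ((s1' : ℂ), (s2' : ℂ)) := by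
  subst hξ
  have hA2 : (((s1 : ℂ), (s2 : ℂ)) + om2) + rho = (((s1 : ℂ), (s2 : ℂ)) + rho) + om2 :=
    add_right_comm _ _ _
  have hA3 : (((s1 : ℂ), (s2 : ℂ)) + (om1 - om2)) + rho =
      (((s1 : ℂ), (s2 : ℂ)) + rho) + (om1 - om2) := add_right_comm _ _ _
  have hA4 : (((s1 : ℂ), (s2 : ℂ)) - om1) + rho = (((s1 : ℂ), (s2 : ℂ)) + rho) - om1 :=
    sub_add_eq_add_sub _ _ _
  simp only [Smat, hA2, hA3, hA4, form_smul]
  set A : ℂ × ℂ := ((s1 : ℂ), (s2 : ℂ)) + rho with hA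
  set B : ℂ × ℂ := ((r1' : ℂ), (r2' : ℂ)) + rho with hB
  set D : ℂ × ℂ := ((s1' : ℂ), (s2' : ℂ)) + rho with hD
  set R : ℂ × ℂ := ((r1 : ℂ), (r2 : ℂ)) + rho with hR
  set c : ℂ := -(2 * (Real.pi : ℂ) * Complex.I) * ((u : ℂ) / (v : ℂ)) with hc
  have hB1 : B.1 = (r1' : ℂ) + 1 := by rw [hB]; simp [rho]
  have hB2 : B.2 = (r2' : ℂ) + 1 := by rw [hB]; simp [rho]
  have e1 : Complex.exp (2 * (Real.pi : ℂ) * Complex.I * (form R D + form (A + om2) B)) =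
      Complex.exp (2 * (Real.pi : ℂ) * Complex.I * form om2 B) *
        Complex.exp (2 * (Real.pi : ℂ) * Complex.I * (form R D + form A B)) := by
    rw [← Complex.exp_add]
    congr 1
    simp only [form, om2, Prod.fst_add, Prod.snd_add]
    ring
  have e2 : Complex.exp (2 * (Real.pi : ℂ) * Complex.I *
        (form R D + form (A + (om1 - om2)) B)) =
      Complex.exp (2 * (Real.pi : ℂ) * Complex.I * form om2 B) *
        Complex.exp (2 * (Real.pi : ℂ) * Complex.I * (form R D + form A B)) := by
    have harg : 2 * (Real.pi : ℂ) * Complex.I * (form R D + form (A + (om1 - om2)) B) =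
        (2 * (Real.pi : ℂ) * Complex.I * form om2 B +
          2 * (Real.pi : ℂ) * Complex.I * (form R D + form A B)) +
          ((-(r2' + 1) : ℤ) : ℂ) * (2 * (Real.pi : ℂ) * Complex.I) := by
      simp only [form, om1, om2, Prod.fst_add, Prod.snd_add, Prod.fst_sub, Prod.snd_sub,
        hB1, hB2]
      push_cast
      ring
    rw [harg, Complex.exp_add, Complex.exp_add, Complex.exp_int_mul_two_pi_mul_I, mul_one]
  have e3 : Complex.exp (2 * (Real.pi : ℂ) * Complex.I * (form R D + form (A - om1) B)) =
      Complex.exp (2 * (Real.pi : ℂ) * Complex.I * form om2 B) *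
        Complex.exp (2 * (Real.pi : ℂ) * Complex.I * (form R D + form A B)) := by
    have harg : 2 * (Real.pi : ℂ) * Complex.I * (form R D + form (A - om1) B) =
        (2 * (Real.pi : ℂ) * Complex.I * form om2 B +
          2 * (Real.pi : ℂ) * Complex.I * (form R D + form A B)) +
          ((-(r1' + r2' + 2) : ℤ) : ℂ) * (2 * (Real.pi : ℂ) * Complex.I) := by
      simp only [form, om1, om2, Prod.fst_add, Prod.snd_add, Prod.fst_sub, Prod.snd_sub,
        hB1, hB2]
      push_cast
      ring
    rw [harg, Complex.exp_add, Complex.exp_add, Complex.exp_int_mul_two_pi_mul_I, mul_one]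
  have hW := weylSum_shift c A D
  linear_combination
    (1 / ((Real.sqrt 3 : ℂ) * (u : ℂ) * (v : ℂ)) *
      weylSum (-(2 * (Real.pi : ℂ) * Complex.I) * ((v : ℂ) / (u : ℂ))) R B *
      weylSum c (A + om2) D) * e1 +
    (1 / ((Real.sqrt 3 : ℂ) * (u : ℂ) * (v : ℂ)) *
      weylSum (-(2 * (Real.pi : ℂ) * Complex.I) * ((v : ℂ) / (u : ℂ))) R B *
      weylSum c (A + (om1 - om2)) D) * e2 +
    (1 / ((Real.sqrt 3 : ℂ) * (u : ℂ) * (v : ℂ)) *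
      weylSum (-(2 * (Real.pi : ℂ) * Complex.I) * ((v : ℂ) / (u : ℂ))) R B *
      weylSum c (A - om1) D) * e3 +
    (Complex.exp (2 * (Real.pi : ℂ) * Complex.I * form om2 B) *
      (1 / ((Real.sqrt 3 : ℂ) * (u : ℂ) * (v : ℂ))) *
      Complex.exp (2 * (Real.pi : ℂ) * Complex.I * (form R D + form A B)) *
      weylSum (-(2 * (Real.pi : ℂ) * Complex.I) * ((v : ℂ) / (u : ℂ))) R B) * hW
end
end

section
/- Let u, v ≥ 3 be coprime integers, let r, r' be affine sl3 weights of level u−3 and s, s' affine sl3 weights of level v−3 (arbitrary integer components), and set ξ = −2πi·(u/v)·(s̄'+ρ). Let t1 = (−1,1,0), t2 = (0,−1,1), t3 = (1,0,−1), the level-0 affinizations of the three weights ω1, ω2−ω1, −ω2 of the fundamental sl3-module of highest weight ω1. Then S[(r, s+t1)][(r',s')] + S[(r, s+t2)][(r',s')] + S[(r, s+t3)][(r',s')] = exp(2πi⟨ω1, r̄'+ρ⟩) · (exp(⟨ω1,ξ⟩) + exp(⟨ω2−ω1,ξ⟩) + exp(⟨−ω2,ξ⟩)) · S[(r,s)][(r',s')].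 -/
noncomputable section

open Complex

section Aux

lemma form_add_left (a b c : ℂ × ℂ) : form (a + b) c = form a c + form b c := by
  simp only [form, Prod.fst_add, Prod.snd_add]; ring

lemma form_smul_right (a : ℂ × ℂ) (k : ℂ) (b : ℂ × ℂ) :
    form a (k • b) = k * form a b := by
  simp only [form, Prod.smul_fst, Prod.smul_snd, smul_eq_mul]; ring

lemma form_neg_left (a b : ℂ × ℂ) : form (-a) b = -form a b := by
  simp only [form, Prod.fst_neg, Prod.snd_neg]; ring

lemma refl1_add (a b : ℂ × ℂ) : refl1 (a + b) = refl1 a + refl1 b := by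
  simp only [refl1, Prod.fst_add, Prod.snd_add, Prod.mk_add_mk, Prod.mk.injEq]
  constructor <;> ring

lemma refl2_add (a b : ℂ × ℂ) : refl2 (a + b) = refl2 a + refl2 b := by
  simp only [refl2, Prod.fst_add, Prod.snd_add, Prod.mk_add_mk, Prod.mk.injEq]
  constructor <;> ring

lemma refl1_neg (a : ℂ × ℂ) : refl1 (-a) = -refl1 a := by
  simp only [refl1, Prod.fst_neg, Prod.snd_neg, Prod.neg_mk, Prod.mk.injEq]
  exact ⟨trivial, by ring⟩

lemma refl2_neg (a : ℂ × ℂ) : refl2 (-a) = -refl2 a := by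
  simp only [refl2, Prod.fst_neg, Prod.snd_neg, Prod.neg_mk, Prod.mk.injEq]
  exact ⟨by ring, trivial⟩

lemma refl1_om1 : refl1 om1 = om2 + -om1 := by
  simp only [refl1, om1, om2, Prod.mk_add_mk, Prod.neg_mk, Prod.mk.injEq]
  norm_num

lemma refl1_om2 : refl1 om2 = om2 := by
  simp only [refl1, om2, Prod.mk.injEq]
  norm_num

lemma refl2_om1 : refl2 om1 = om1 := by
  simp only [refl2, om1, Prod.mk.injEq]
  norm_num

lemma refl2_om2 : refl2 om2 = om1 + -om2 := by
  simp only [refl2, om1, om2, Prod.mk_add_mk, Prod.neg_mk, Prod.mk.injEq]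
  norm_num

set_option maxHeartbeats 1600000 in
/-- The key Weyl-sum identity: the three-weight set is stable under the Weyl group. -/
lemma key_weylSum (c : ℂ) (p q : ℂ × ℂ) :
    weylSum c (p + om1) q + weylSum c (p + (om2 + -om1)) q + weylSum c (p + -om2) q =
      (Complex.exp (c * form om1 q) + Complex.exp (c * form (om2 + -om1) q) +
        Complex.exp (c * form (-om2) q)) * weylSum c p q := by
  simp only [weylSum, weyl, List.map_cons, List.map_nil, List.sum_cons, List.sum_nil,
    Function.comp_apply, id_eq, form, refl1, refl2, om1, om2, Prod.fst_add, Prod.snd_add,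
    Prod.fst_neg, Prod.snd_neg, Prod.mk_add_mk, Prod.neg_mk, one_mul, neg_mul, mul_neg,
    mul_one, neg_neg, add_mul, mul_add, ← Complex.exp_add]
  ring_nf

lemma exp_shift (x y : ℂ) (n : ℤ) (h : x = y + n * (2 * (Real.pi : ℂ) * Complex.I)) :
    Complex.exp x = Complex.exp y := by
  rw [h, Complex.exp_add]
  rw [show ((n : ℂ) * (2 * (Real.pi : ℂ) * Complex.I)) = n * (2 * (Real.pi : ℂ) * Complex.I)
    from rfl]
  rw [Complex.exp_int_mul_two_pi_mul_I, mul_one]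

lemma pref (X : ℂ) (p q t : ℂ × ℂ) (n : ℤ)
    (h : form t q = form om1 q + (n : ℂ)) :
    Complex.exp (2 * (Real.pi : ℂ) * Complex.I * (X + form (p + t) q)) =
      Complex.exp (2 * (Real.pi : ℂ) * Complex.I * (X + form p q)) *
        Complex.exp (2 * (Real.pi : ℂ) * Complex.I * form om1 q) := by
  rw [← Complex.exp_add]
  refine exp_shift _ _ n ?_
  rw [form_add_left, h]; ring

end Aux

/-- Proposition A.2 of Fehily–Ridout (case of the fundamental weight ω₁): summing the
W₃ S-matrix entries over the shifts of `s` by the three weights `ω₁, ω₂−ω₁, −ω₂` of the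
fundamental sl₃-module `L(ω₁)` multiplies `S[(r,s)][(r',s')]` by
`e^{2πi⟨ω₁,r̄'+ρ⟩}·(e^{⟨ω₁,ξ⟩}+e^{⟨ω₂−ω₁,ξ⟩}+e^{⟨−ω₂,ξ⟩})`. -/
theorem smatrix_tensor_om1
    (u v : ℕ) (hu : 3 ≤ u) (hv : 3 ≤ v) (huv : Nat.Coprime u v)
    (r0 r1 r2 r0' r1' r2' s0 s1 s2 s0' s1' s2' : ℤ)
    (hrsum : r0 + r1 + r2 = (u : ℤ) - 3) (hrsum' : r0' + r1' + r2' = (u : ℤ) - 3)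
    (hssum : s0 + s1 + s2 = (v : ℤ) - 3) (hssum' : s0' + s1' + s2' = (v : ℤ) - 3)
    (ξ : ℂ × ℂ)
    (hξ : ξ = (-(2 * (Real.pi : ℂ) * Complex.I) * ((u : ℂ) / (v : ℂ))) •
      (((s1' : ℂ), (s2' : ℂ)) + rho)) :
    Smat u v ((r1 : ℂ), (r2 : ℂ)) (((s1 : ℂ), (s2 : ℂ)) + om1)
        ((r1' : ℂ), (r2' : ℂ)) ((s1' : ℂ), (s2' : ℂ)) +
      Smat u v ((r1 : ℂ), (r2 : ℂ)) (((s1 : ℂ), (s2 : ℂ)) + (om2 - om1))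
        ((r1' : ℂ), (r2' : ℂ)) ((s1' : ℂ), (s2' : ℂ)) +
      Smat u v ((r1 : ℂ), (r2 : ℂ)) (((s1 : ℂ), (s2 : ℂ)) - om2)
        ((r1' : ℂ), (r2' : ℂ)) ((s1' : ℂ), (s2' : ℂ)) =
      Complex.exp (2 * (Real.pi : ℂ) * Complex.I *
          form om1 (((r1' : ℂ), (r2' : ℂ)) + rho)) *
        (Complex.exp (form om1 ξ) + Complex.exp (form (om2 - om1) ξ) +
          Complex.exp (form (-om2) ξ)) *
        Smat u v ((r1 : ℂ), (r2 : ℂ)) ((s1 : ℂ), (s2 : ℂ))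
          ((r1' : ℂ), (r2' : ℂ)) ((s1' : ℂ), (s2' : ℂ)) := by
  have hA1 : (((s1 : ℂ), (s2 : ℂ)) + om1) + rho = (((s1 : ℂ), (s2 : ℂ)) + rho) + om1 :=
    add_right_comm _ _ _
  have hA2 : (((s1 : ℂ), (s2 : ℂ)) + (om2 + -om1)) + rho
      = (((s1 : ℂ), (s2 : ℂ)) + rho) + (om2 + -om1) := add_right_comm _ _ _
  have hA3 : (((s1 : ℂ), (s2 : ℂ)) + -om2) + rho = (((s1 : ℂ), (s2 : ℂ)) + rho) + -om2 :=
    add_right_comm _ _ _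
  have h1 : form om1 (((r1' : ℂ), (r2' : ℂ)) + rho)
      = form om1 (((r1' : ℂ), (r2' : ℂ)) + rho) + ((0 : ℤ) : ℂ) := by
    push_cast; ring
  have h2 : form (om2 + -om1) (((r1' : ℂ), (r2' : ℂ)) + rho)
      = form om1 (((r1' : ℂ), (r2' : ℂ)) + rho) + ((-(r1' + 1) : ℤ) : ℂ) := by
    simp only [form, om1, om2, rho, Prod.fst_add, Prod.snd_add, Prod.mk_add_mk, Prod.neg_mk]
    push_cast; ring
  have h3 : form (-om2) (((r1' : ℂ), (r2' : ℂ)) + rho)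
      = form om1 (((r1' : ℂ), (r2' : ℂ)) + rho) + ((-(r1' + 1) - (r2' + 1) : ℤ) : ℂ) := by
    simp only [form, om1, om2, rho, Prod.fst_add, Prod.snd_add, Prod.mk_add_mk, Prod.neg_mk]
    push_cast; ring
  simp only [Smat, sub_eq_add_neg]
  rw [hA1, hA2, hA3]
  rw [pref _ _ _ _ _ h1, pref _ _ _ _ _ h2, pref _ _ _ _ _ h3]
  rw [hξ, form_smul_right, form_smul_right, form_smul_right]
  linear_combination
    ((1 / ((Real.sqrt 3 : ℂ) * (u : ℂ) * (v : ℂ))) *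
      Complex.exp (2 * (Real.pi : ℂ) * Complex.I *
        (form (((r1 : ℂ), (r2 : ℂ)) + rho) (((s1' : ℂ), (s2' : ℂ)) + rho) +
          form (((s1 : ℂ), (s2 : ℂ)) + rho) (((r1' : ℂ), (r2' : ℂ)) + rho))) *
      Complex.exp (2 * (Real.pi : ℂ) * Complex.I *
        form om1 (((r1' : ℂ), (r2' : ℂ)) + rho)) *
      weylSum (-(2 * (Real.pi : ℂ) * Complex.I) * ((v : ℂ) / (u : ℂ)))
        (((r1 : ℂ), (r2 : ℂ)) + rho) (((r1' : ℂ), (r2' : ℂ)) + rho)) *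
    key_weylSum (-(2 * (Real.pi : ℂ) * Complex.I) * ((u : ℂ) / (v : ℂ)))
      (((s1 : ℂ), (s2 : ℂ)) + rho) (((s1' : ℂ), (s2' : ℂ)) + rho)
end
end

section
/- Let u, v ≥ 3 be coprime integers, let r, r' be affine sl3 weights of level u−3 and s, s' affine sl3 weights of level v−3 (integer components), let σ denote the cyclic shift σ(t0,t1,t2) = (t2,t0,t1), and set j^tw(r',s') = (r'1−r'2)/3 − (u/(3v))·(s'1−s'2) − 1/2. Then S[(σ(r), s)][(r',s')] = (−1)^v · exp(2πi·v·j^tw(r',s')) · S[(r,s)][(r',s')] and S[(r, σ(s))][(r',s')] = (−1)^v · exp(−2πi·v·j^tw(r',s')) · S[(r,s)][(r',s')]; consequently S[(σ(r), σ(s))][(r',s')] = S[(r,s)][(r',s')], so the S-matrix is well defined on simultaneous cyclic-shift orbits of its indices. -/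
noncomputable section

open Complex

lemma exp_congr' (a b : ℂ) (n : ℤ) (h : a = b + n * (2 * (Real.pi : ℂ) * Complex.I)) :
    Complex.exp a = Complex.exp b := by
  rw [h, Complex.exp_add, Complex.exp_int_mul_two_pi_mul_I, mul_one]

lemma weylSum_eq (c : ℂ) (m n : ℂ × ℂ) : weylSum c m n =
    Complex.exp (c * form m n) - Complex.exp (c * form (refl1 m) n)
      - Complex.exp (c * form (refl2 m) n)
      + Complex.exp (c * form (refl1 (refl2 m)) n)
      + Complex.exp (c * form (refl2 (refl1 m)) n)
      - Complex.exp (c * form (refl1 (refl2 (refl1 m))) n) := by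
  simp [weylSum, weyl]
  ring

lemma weylSum_shift_s6 (u v : ℕ) (hu : (u : ℂ) ≠ 0) (x1 x2 w1 y1 y2 : ℂ) (Y1 Y2 : ℤ)
    (hw : w1 = (u : ℂ) - x1 - x2) (hY1 : y1 = (Y1 : ℂ)) (hY2 : y2 = (Y2 : ℂ)) :
    weylSum (-(2 * (Real.pi : ℂ) * Complex.I) * ((v : ℂ) / (u : ℂ))) (w1, x1) (y1, y2)
      = Complex.exp (-(2 * (Real.pi : ℂ) * Complex.I) * (v : ℂ) * (2 * y1 + y2) / 3) *
        weylSum (-(2 * (Real.pi : ℂ) * Complex.I) * ((v : ℂ) / (u : ℂ))) (x1, x2) (y1, y2) := by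
  subst hw hY1 hY2
  rw [weylSum_eq, weylSum_eq]
  set c : ℂ := -(2 * (Real.pi : ℂ) * Complex.I) * ((v : ℂ) / (u : ℂ)) with hc
  set E : ℂ := Complex.exp (-(2 * (Real.pi : ℂ) * Complex.I) * (v : ℂ) * (2 * (Y1:ℂ) + (Y2:ℂ)) / 3) with hE
  have key : ∀ (a b : ℂ × ℂ) (n : ℤ),
      c * form a ((Y1:ℂ), (Y2:ℂ)) =
        (-(2 * (Real.pi : ℂ) * Complex.I) * (v : ℂ) * (2 * (Y1:ℂ) + (Y2:ℂ)) / 3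
          + c * form b ((Y1:ℂ), (Y2:ℂ))) + n * (2 * (Real.pi : ℂ) * Complex.I) →
      Complex.exp (c * form a ((Y1:ℂ), (Y2:ℂ))) = E * Complex.exp (c * form b ((Y1:ℂ), (Y2:ℂ))) := by
    intro a b n h
    rw [hE, ← Complex.exp_add]
    exact exp_congr' _ _ n h
  have h1 := key ((u : ℂ) - x1 - x2, x1) (refl1 (refl2 (x1, x2))) 0 (by
    simp only [form, refl1, refl2, hc]; push_cast; field_simp; ring)
  have h2 := key (refl1 ((u : ℂ) - x1 - x2, x1)) (refl2 (x1, x2)) ((v:ℤ) * Y1) (by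
    simp only [form, refl1, refl2, hc]; push_cast; field_simp; ring)
  have h3 := key (refl2 ((u : ℂ) - x1 - x2, x1)) (refl1 (refl2 (refl1 (x1, x2)))) 0 (by
    simp only [form, refl1, refl2, hc]; push_cast; field_simp; ring)
  have h4 := key (refl1 (refl2 ((u : ℂ) - x1 - x2, x1))) (refl2 (refl1 (x1, x2))) ((v:ℤ) * Y1) (by
    simp only [form, refl1, refl2, hc]; push_cast; field_simp; ring)
  have h5 := key (refl2 (refl1 ((u : ℂ) - x1 - x2, x1))) (x1, x2) ((v:ℤ) * (Y1 + Y2)) (by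
    simp only [form, refl1, refl2, hc]; push_cast; field_simp; ring)
  have h6 := key (refl1 (refl2 (refl1 ((u : ℂ) - x1 - x2, x1)))) (refl1 (x1, x2)) ((v:ℤ) * (Y1 + Y2)) (by
    simp only [form, refl1, refl2, hc]; push_cast; field_simp; ring)
  linear_combination h1 - h2 - h3 + h4 + h5 - h6

set_option maxHeartbeats 1000000 in
/-- Equations (eq:Soutaut)/(eq:Soutaut') of Fehily–Ridout: under the cyclic shift
`σ(t0,t1,t2) = (t2,t0,t1)` of one index of the W₃ S-matrix one has
`S[(σr,s)][(r',s')] = (−1)^v·e^{2πi·v·j^tw(r',s')}·S[(r,s)][(r',s')]` and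
`S[(r,σs)][(r',s')] = (−1)^v·e^{−2πi·v·j^tw(r',s')}·S[(r,s)][(r',s')]`; consequently the
S-matrix is invariant under the simultaneous cyclic shift of its first index pair.
(The projection of `σ(t0,t1,t2)` onto the sl₃ weight plane is `(t0,t1)`.) -/
theorem smatrix_cyclic_shift
    (u v : ℕ) (hu : 3 ≤ u) (hv : 3 ≤ v) (huv : Nat.Coprime u v)
    (r0 r1 r2 r0' r1' r2' s0 s1 s2 s0' s1' s2' : ℤ)
    (hrsum : r0 + r1 + r2 = (u : ℤ) - 3) (hrsum' : r0' + r1' + r2' = (u : ℤ) - 3)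
    (hssum : s0 + s1 + s2 = (v : ℤ) - 3) (hssum' : s0' + s1' + s2' = (v : ℤ) - 3) :
    (Smat u v ((r0 : ℂ), (r1 : ℂ)) ((s1 : ℂ), (s2 : ℂ))
        ((r1' : ℂ), (r2' : ℂ)) ((s1' : ℂ), (s2' : ℂ)) =
      (-1 : ℂ) ^ v *
        Complex.exp (2 * (Real.pi : ℂ) * Complex.I * (v : ℂ) *
          ((jtw u v r1' r2' s1' s2' : ℝ) : ℂ)) *
        Smat u v ((r1 : ℂ), (r2 : ℂ)) ((s1 : ℂ), (s2 : ℂ))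
          ((r1' : ℂ), (r2' : ℂ)) ((s1' : ℂ), (s2' : ℂ))) ∧
    (Smat u v ((r1 : ℂ), (r2 : ℂ)) ((s0 : ℂ), (s1 : ℂ))
        ((r1' : ℂ), (r2' : ℂ)) ((s1' : ℂ), (s2' : ℂ)) =
      (-1 : ℂ) ^ v *
        Complex.exp (-(2 * (Real.pi : ℂ) * Complex.I) * (v : ℂ) *
          ((jtw u v r1' r2' s1' s2' : ℝ) : ℂ)) *
        Smat u v ((r1 : ℂ), (r2 : ℂ)) ((s1 : ℂ), (s2 : ℂ))
          ((r1' : ℂ), (r2' : ℂ)) ((s1' : ℂ), (s2' : ℂ))) ∧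
    (Smat u v ((r0 : ℂ), (r1 : ℂ)) ((s0 : ℂ), (s1 : ℂ))
        ((r1' : ℂ), (r2' : ℂ)) ((s1' : ℂ), (s2' : ℂ)) =
      Smat u v ((r1 : ℂ), (r2 : ℂ)) ((s1 : ℂ), (s2 : ℂ))
        ((r1' : ℂ), (r2' : ℂ)) ((s1' : ℂ), (s2' : ℂ))) := by
  have hu0 : (u : ℂ) ≠ 0 := Nat.cast_ne_zero.mpr (by omega)
  have hv0 : (v : ℂ) ≠ 0 := Nat.cast_ne_zero.mpr (by omega)
  have hr0c : (r0 : ℂ) = (u : ℂ) - 3 - (r1 : ℂ) - (r2 : ℂ) := by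
    have h := congrArg (fun z : ℤ => (z : ℂ)) hrsum
    push_cast at h
    linear_combination h
  have hs0c : (s0 : ℂ) = (v : ℂ) - 3 - (s1 : ℂ) - (s2 : ℂ) := by
    have h := congrArg (fun z : ℤ => (z : ℂ)) hssum
    push_cast at h
    linear_combination h
  have hm1 : (-1 : ℂ) ^ v = Complex.exp ((v : ℂ) * ((Real.pi : ℂ) * Complex.I)) := by
    rw [← Complex.exp_pi_mul_I, ← Complex.exp_nat_mul]
  have hj1 : 2 * (Real.pi : ℂ) * Complex.I * (v : ℂ) * ((jtw u v r1' r2' s1' s2' : ℝ) : ℂ)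
      = 2 * (Real.pi : ℂ) * Complex.I *
        (((v:ℂ) * ((r1':ℂ) - (r2':ℂ)) - (u:ℂ) * ((s1':ℂ) - (s2':ℂ))) / 3 - (v:ℂ) / 2) := by
    simp only [jtw]
    push_cast
    field_simp
  have hj2 : -(2 * (Real.pi : ℂ) * Complex.I) * (v : ℂ) * ((jtw u v r1' r2' s1' s2' : ℝ) : ℂ)
      = -(2 * (Real.pi : ℂ) * Complex.I) *
        (((v:ℂ) * ((r1':ℂ) - (r2':ℂ)) - (u:ℂ) * ((s1':ℂ) - (s2':ℂ))) / 3 - (v:ℂ) / 2) := by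
    simp only [jtw]
    push_cast
    field_simp
  have key1 : ∀ a b : ℂ,
      Smat u v ((r0 : ℂ), (r1 : ℂ)) (a, b) ((r1' : ℂ), (r2' : ℂ)) ((s1' : ℂ), (s2' : ℂ)) =
        (-1 : ℂ) ^ v *
          Complex.exp (2 * (Real.pi : ℂ) * Complex.I * (v : ℂ) *
            ((jtw u v r1' r2' s1' s2' : ℝ) : ℂ)) *
          Smat u v ((r1 : ℂ), (r2 : ℂ)) (a, b) ((r1' : ℂ), (r2' : ℂ)) ((s1' : ℂ), (s2' : ℂ)) := by
    intro a b
    simp only [Smat, rho, Prod.mk_add_mk]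
    have hshift := weylSum_shift_s6 u v hu0 ((r1 : ℂ) + 1) ((r2 : ℂ) + 1) ((r0 : ℂ) + 1)
      ((r1' : ℂ) + 1) ((r2' : ℂ) + 1) (r1' + 1) (r2' + 1)
      (by rw [hr0c]; ring) (by push_cast; ring) (by push_cast; ring)
    rw [hshift]
    have hphase :
        Complex.exp (2 * (Real.pi : ℂ) * Complex.I *
            (form ((r0 : ℂ) + 1, (r1 : ℂ) + 1) ((s1' : ℂ) + 1, (s2' : ℂ) + 1) +
              form (a + 1, b + 1) ((r1' : ℂ) + 1, (r2' : ℂ) + 1))) *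
          Complex.exp (-(2 * (Real.pi : ℂ) * Complex.I) * (v : ℂ) *
            (2 * ((r1' : ℂ) + 1) + ((r2' : ℂ) + 1)) / 3) =
        (-1 : ℂ) ^ v *
          Complex.exp (2 * (Real.pi : ℂ) * Complex.I * (v : ℂ) *
            ((jtw u v r1' r2' s1' s2' : ℝ) : ℂ)) *
          Complex.exp (2 * (Real.pi : ℂ) * Complex.I *
            (form ((r1 : ℂ) + 1, (r2 : ℂ) + 1) ((s1' : ℂ) + 1, (s2' : ℂ) + 1) +
              form (a + 1, b + 1) ((r1' : ℂ) + 1, (r2' : ℂ) + 1))) := by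
      rw [hm1, ← Complex.exp_add, ← Complex.exp_add, ← Complex.exp_add]
      refine exp_congr' _ _
        ((u : ℤ) * (s1' + 1) - ((r1 + 1) + (r2 + 1)) * (s1' + 1) - (r2 + 1) * (s2' + 1)
          - (v : ℤ) * (r1' + 1)) ?_
      rw [hj1, hr0c]
      simp only [form]
      push_cast
      field_simp
      ring
    linear_combination (1 / ((Real.sqrt 3 : ℂ) * (u : ℂ) * (v : ℂ)) *
      weylSum (-(2 * (Real.pi : ℂ) * Complex.I) * ((v : ℂ) / (u : ℂ)))
        ((r1 : ℂ) + 1, (r2 : ℂ) + 1) ((r1' : ℂ) + 1, (r2' : ℂ) + 1) *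
      weylSum (-(2 * (Real.pi : ℂ) * Complex.I) * ((u : ℂ) / (v : ℂ)))
        (a + 1, b + 1) ((s1' : ℂ) + 1, (s2' : ℂ) + 1)) * hphase
  have key2 : ∀ a b : ℂ,
      Smat u v (a, b) ((s0 : ℂ), (s1 : ℂ)) ((r1' : ℂ), (r2' : ℂ)) ((s1' : ℂ), (s2' : ℂ)) =
        (-1 : ℂ) ^ v *
          Complex.exp (-(2 * (Real.pi : ℂ) * Complex.I) * (v : ℂ) *
            ((jtw u v r1' r2' s1' s2' : ℝ) : ℂ)) *
          Smat u v (a, b) ((s1 : ℂ), (s2 : ℂ)) ((r1' : ℂ), (r2' : ℂ)) ((s1' : ℂ), (s2' : ℂ)) := by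
    intro a b
    simp only [Smat, rho, Prod.mk_add_mk]
    have hshift := weylSum_shift_s6 v u hv0 ((s1 : ℂ) + 1) ((s2 : ℂ) + 1) ((s0 : ℂ) + 1)
      ((s1' : ℂ) + 1) ((s2' : ℂ) + 1) (s1' + 1) (s2' + 1)
      (by rw [hs0c]; ring) (by push_cast; ring) (by push_cast; ring)
    rw [hshift]
    have hphase :
        Complex.exp (2 * (Real.pi : ℂ) * Complex.I *
            (form (a + 1, b + 1) ((s1' : ℂ) + 1, (s2' : ℂ) + 1) +
              form ((s0 : ℂ) + 1, (s1 : ℂ) + 1) ((r1' : ℂ) + 1, (r2' : ℂ) + 1))) *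
          Complex.exp (-(2 * (Real.pi : ℂ) * Complex.I) * (u : ℂ) *
            (2 * ((s1' : ℂ) + 1) + ((s2' : ℂ) + 1)) / 3) =
        (-1 : ℂ) ^ v *
          Complex.exp (-(2 * (Real.pi : ℂ) * Complex.I) * (v : ℂ) *
            ((jtw u v r1' r2' s1' s2' : ℝ) : ℂ)) *
          Complex.exp (2 * (Real.pi : ℂ) * Complex.I *
            (form (a + 1, b + 1) ((s1' : ℂ) + 1, (s2' : ℂ) + 1) +
              form ((s1 : ℂ) + 1, (s2 : ℂ) + 1) ((r1' : ℂ) + 1, (r2' : ℂ) + 1))) := by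
      rw [hm1, ← Complex.exp_add, ← Complex.exp_add, ← Complex.exp_add]
      refine exp_congr' _ _
        ((v : ℤ) * (r1' + 1) - ((s1 + 1) + (s2 + 1)) * (r1' + 1) - (s2 + 1) * (r2' + 1)
          - (u : ℤ) * (s1' + 1) - (v : ℤ)) ?_
      rw [hj2, hs0c]
      simp only [form]
      push_cast
      field_simp
      ring
    linear_combination (1 / ((Real.sqrt 3 : ℂ) * (u : ℂ) * (v : ℂ)) *
      weylSum (-(2 * (Real.pi : ℂ) * Complex.I) * ((v : ℂ) / (u : ℂ)))
        (a + 1, b + 1) ((r1' : ℂ) + 1, (r2' : ℂ) + 1) *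
      weylSum (-(2 * (Real.pi : ℂ) * Complex.I) * ((u : ℂ) / (v : ℂ)))
        ((s1 : ℂ) + 1, (s2 : ℂ) + 1) ((s1' : ℂ) + 1, (s2' : ℂ) + 1)) * hphase
  refine ⟨key1 (s1 : ℂ) (s2 : ℂ), key2 (r1 : ℂ) (r2 : ℂ), ?_⟩
  rw [key1 (s0 : ℂ) (s1 : ℂ), key2 (r1 : ℂ) (r2 : ℂ)]
  have hA : Complex.exp (2 * (Real.pi : ℂ) * Complex.I * (v : ℂ) *
        ((jtw u v r1' r2' s1' s2' : ℝ) : ℂ)) *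
      Complex.exp (-(2 * (Real.pi : ℂ) * Complex.I) * (v : ℂ) *
        ((jtw u v r1' r2' s1' s2' : ℝ) : ℂ)) = 1 := by
    rw [← Complex.exp_add, show 2 * (Real.pi : ℂ) * Complex.I * (v : ℂ) *
        ((jtw u v r1' r2' s1' s2' : ℝ) : ℂ) +
      -(2 * (Real.pi : ℂ) * Complex.I) * (v : ℂ) *
        ((jtw u v r1' r2' s1' s2' : ℝ) : ℂ) = 0 from by ring, Complex.exp_zero]
  have hB : ((-1 : ℂ)) ^ v * (-1 : ℂ) ^ v = 1 := by
    rw [← mul_pow]; norm_num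
  linear_combination (Smat u v ((r1 : ℂ), (r2 : ℂ)) ((s1 : ℂ), (s2 : ℂ))
      ((r1' : ℂ), (r2' : ℂ)) ((s1' : ℂ), (s2' : ℂ)) *
    Complex.exp (2 * (Real.pi : ℂ) * Complex.I * (v : ℂ) *
        ((jtw u v r1' r2' s1' s2' : ℝ) : ℂ)) *
    Complex.exp (-(2 * (Real.pi : ℂ) * Complex.I) * (v : ℂ) *
        ((jtw u v r1' r2' s1' s2' : ℝ) : ℂ))) * hB +
    (Smat u v ((r1 : ℂ), (r2 : ℂ)) ((s1 : ℂ), (s2 : ℂ))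
      ((r1' : ℂ), (r2' : ℂ)) ((s1' : ℂ), (s2' : ℂ))) * hA
end
end

section
/- Let u, v ≥ 3 be coprime integers and define σ : ℚ³ → ℚ³ by σ(λ0,λ1,λ2) = (λ2 − u/v, λ0, λ1 + u/v). Then: (a) σ∘σ∘σ is the identity on ℚ³; (b) σ maps Ω(u,v) into itself; (c) σ(λ) ≠ λ for every λ ∈ Ω(u,v). Hence σ generates a free ℤ/3-action on Ω(u,v). -/
noncomputable section

/-- The parameter set `Ω(u,v) ⊂ ℚ³` of weights labelling the relaxed highest-weight
families of the Bershadsky–Polyakov minimal model at level `k = u/v − 3`: triples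
`λᵢ = aᵢ − (u/v)·bᵢ` where `a ∈ ℤ³` has nonnegative entries summing to `u−3` and
`b ∈ ℤ³` has nonnegative entries summing to `v−1` with `b₀ ≥ 1` and `b₁ ≥ 1`. -/
def Omega (u v : ℕ) : Set (ℚ × ℚ × ℚ) :=
  { l | ∃ a0 a1 a2 b0 b1 b2 : ℤ,
      0 ≤ a0 ∧ 0 ≤ a1 ∧ 0 ≤ a2 ∧ a0 + a1 + a2 = (u : ℤ) - 3 ∧
      0 ≤ b0 ∧ 0 ≤ b1 ∧ 0 ≤ b2 ∧ b0 + b1 + b2 = (v : ℤ) - 1 ∧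
      1 ≤ b0 ∧ 1 ≤ b1 ∧
      l.1 = (a0 : ℚ) - ((u : ℚ) / (v : ℚ)) * (b0 : ℚ) ∧
      l.2.1 = (a1 : ℚ) - ((u : ℚ) / (v : ℚ)) * (b1 : ℚ) ∧
      l.2.2 = (a2 : ℚ) - ((u : ℚ) / (v : ℚ)) * (b2 : ℚ) }

/-- The ℤ/3-generator `σ(λ0,λ1,λ2) = (λ2 − u/v, λ0, λ1 + u/v)` acting on triples of
Dynkin labels. -/
def sigmaBP (u v : ℕ) : ℚ × ℚ × ℚ → ℚ × ℚ × ℚ :=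
  fun l => (l.2.2 - (u : ℚ) / (v : ℚ), l.1, l.2.1 + (u : ℚ) / (v : ℚ))

/-- For coprime `u, v ≥ 3`, the map `σ` (a) cubes to the identity, (b) maps `Ω(u,v)` into
itself, and (c) has no fixed point in `Ω(u,v)`; hence it generates a free ℤ/3-action on
`Ω(u,v)`. -/
theorem sigma_free_Z3_action
    (u v : ℕ) (hu : 3 ≤ u) (hv : 3 ≤ v) (huv : Nat.Coprime u v) :
    (∀ l : ℚ × ℚ × ℚ, sigmaBP u v (sigmaBP u v (sigmaBP u v l)) = l) ∧
    (∀ l ∈ Omega u v, sigmaBP u v l ∈ Omega u v) ∧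
    (∀ l ∈ Omega u v, sigmaBP u v l ≠ l) := by
  have hv0 : (v : ℚ) ≠ 0 := by
    have : 0 < v := by omega
    exact_mod_cast this.ne'
  refine ⟨?_, ?_, ?_⟩
  · intro l
    obtain ⟨x, y, z⟩ := l
    simp only [sigmaBP, Prod.mk.injEq]
    refine ⟨by ring, by ring, by ring⟩
  · rintro ⟨l0, l1, l2⟩ ⟨a0, a1, a2, b0, b1, b2, ha0, ha1, ha2, hasum,
      hb0, hb1, hb2, hbsum, hb0', hb1', h0, h1, h2⟩
    dsimp only at h0 h1 h2
    refine ⟨a2, a0, a1, b2 + 1, b0, b1 - 1, ha2, ha0, ha1, by omega,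
      by omega, hb0, by omega, by omega, by omega, hb0', ?_, ?_, ?_⟩
    · simp only [sigmaBP]
      rw [h2]; push_cast; ring
    · simpa [sigmaBP] using h0
    · simp only [sigmaBP]
      rw [h1]; push_cast; ring
  · rintro ⟨l0, l1, l2⟩ ⟨a0, a1, a2, b0, b1, b2, ha0, ha1, ha2, hasum,
      hb0, hb1, hb2, hbsum, hb0', hb1', h0, h1, h2⟩ hfix
    dsimp only at h0 h1 h2
    simp only [sigmaBP, Prod.ext_iff, Prod.mk.injEq] at hfix
    obtain ⟨e1, e2, e3⟩ := hfix
    -- translate to ℤ equations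
    rw [h0, h1] at e2
    rw [h1, h2] at e3
    have hcop : IsCoprime (v : ℤ) (u : ℤ) := by
      rw [Int.isCoprime_iff_gcd_eq_one, Int.gcd_natCast_natCast]
      exact Nat.coprime_comm.mp huv
    have hq2 : (v : ℚ) * (a0 - a1) = (u : ℚ) * (b0 - b1) := by
      field_simp at e2
      linarith
    have hq3 : (v : ℚ) * (a1 - a2) = (u : ℚ) * (b1 - b2 - 1) := by
      field_simp at e3
      linarith
    have hZ2 : (v : ℤ) * (a0 - a1) = (u : ℤ) * (b0 - b1) := by exact_mod_cast hq2
    have hZ3 : (v : ℤ) * (a1 - a2) = (u : ℤ) * (b1 - b2 - 1) := by exact_mod_cast hq3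
    have hd2 : (v : ℤ) ∣ (b0 - b1) := hcop.dvd_of_dvd_mul_left ⟨a0 - a1, by linarith⟩
    have hd3 : (v : ℤ) ∣ (b1 - b2 - 1) := hcop.dvd_of_dvd_mul_left ⟨a1 - a2, by linarith⟩
    have hvz : (3 : ℤ) ≤ (v : ℤ) := by exact_mod_cast hv
    have hz2 : b0 - b1 = 0 := Int.eq_zero_of_abs_lt_dvd hd2 (by rw [abs_lt]; omega)
    have hz3 : b1 - b2 - 1 = 0 := Int.eq_zero_of_abs_lt_dvd hd3 (by rw [abs_lt]; omega)
    have huZ : (3 : ℤ) ∣ (u : ℤ) := by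
      have ha01 : a0 = a1 := by
        have := hZ2; rw [hz2] at this; simp at this; omega
      have ha12 : a1 = a2 := by
        have := hZ3; rw [hz3] at this; simp at this; omega
      exact ⟨a0 + 1, by omega⟩
    have hvZ : (3 : ℤ) ∣ (v : ℤ) := ⟨b1, by omega⟩
    have h3u : (3 : ℕ) ∣ u := by exact_mod_cast huZ
    have h3v : (3 : ℕ) ∣ v := by exact_mod_cast hvZ
    have := Nat.dvd_gcd h3u h3v
    rw [huv] at this
    omega
end
end

section
/- Let u, v ≥ 3 be coprime integers, k = u/v − 3, and κ = (2k+3)/6 = u/(3v) − 1/2. For any rational numbers r1, r2, s1, s2, set λ1 = r1 − (u/v)(s1+1) and λ2 = r2 − (u/v)·s2, and define Δ_BP = ((λ1−λ2)² − 3(λ1+λ2)(2(k+1) − λ1 − λ2))/(12(k+3)), Δ^tw = Δ_BP + (λ1−λ2)/6 + κ/4, and Δ_W = (x1·x2 + x1² + x2² − 3(u−v)²)/(3uv) with x1 = v(r1+1) − u(s1+1) and x2 = v(r2+1) − u(s2+1). Then Δ_W + 9κ/4 = Δ^tw. -/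
/-- Conformal-weight matching underlying the inverse quantum hamiltonian reduction for
the Bershadsky–Polyakov minimal models (proof of Proposition 3.6 of Fehily–Ridout): at
level `k = u/v − 3` with `κ = (2k+3)/6`, for any rational `r1, r2, s1, s2`, setting
`λ1 = r1 − (u/v)(s1+1)`, `λ2 = r2 − (u/v)·s2`, one has `Δ_W + 9κ/4 = Δ^tw`, where
`Δ_BP = ((λ1−λ2)² − 3(λ1+λ2)(2(k+1) − λ1 − λ2))/(12(k+3))`,
`Δ^tw = Δ_BP + (λ1−λ2)/6 + κ/4`, and
`Δ_W = (x1·x2 + x1² + x2² − 3(u−v)²)/(3uv)` with `x1 = v(r1+1) − u(s1+1)` and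
`x2 = v(r2+1) − u(s2+1)`. -/
theorem conformal_weight_matching
    (u v : ℕ) (hu : 3 ≤ u) (hv : 3 ≤ v) (huv : Nat.Coprime u v)
    (r1 r2 s1 s2 : ℚ)
    (k κ l1 l2 dBP dtw x1 x2 dW : ℚ)
    (hk : k = (u : ℚ) / (v : ℚ) - 3)
    (hκ : κ = (2 * k + 3) / 6)
    (hl1 : l1 = r1 - ((u : ℚ) / (v : ℚ)) * (s1 + 1))
    (hl2 : l2 = r2 - ((u : ℚ) / (v : ℚ)) * s2)
    (hdBP : dBP = ((l1 - l2) ^ 2 - 3 * (l1 + l2) * (2 * (k + 1) - l1 - l2)) /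
      (12 * (k + 3)))
    (hdtw : dtw = dBP + (l1 - l2) / 6 + κ / 4)
    (hx1 : x1 = (v : ℚ) * (r1 + 1) - (u : ℚ) * (s1 + 1))
    (hx2 : x2 = (v : ℚ) * (r2 + 1) - (u : ℚ) * (s2 + 1))
    (hdW : dW = (x1 * x2 + x1 ^ 2 + x2 ^ 2 - 3 * ((u : ℚ) - (v : ℚ)) ^ 2) /
      (3 * (u : ℚ) * (v : ℚ))) :
    dW + 9 * κ / 4 = dtw := by
  have hu0 : (u : ℚ) ≠ 0 := by
    have : (0 : ℚ) < (u : ℚ) := by exact_mod_cast (by omega : 0 < u)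
    linarith
  have hv0 : (v : ℚ) ≠ 0 := by
    have : (0 : ℚ) < (v : ℚ) := by exact_mod_cast (by omega : 0 < v)
    linarith
  subst hk hκ hl1 hl2 hdBP hdtw hx1 hx2 hdW
  have h3 : (u : ℚ) / (v : ℚ) - 3 + 3 ≠ 0 := by
    simp [div_ne_zero hu0 hv0]
  rw [show (u:ℚ)/v - 3 + 3 = (u:ℚ)/v from by ring]
  rw [show (12:ℚ) * ((u:ℚ)/v) = 12*(u:ℚ)/v from by ring, div_div_eq_mul_div]
  field_simp
  ring
end
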